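/- Let Φ₁ and Φ₂ be independent point processes with σ-finite moment measures, and let f, g : 𝕏 → ℝ≥0 be measurable with g integrable with respect to M_{Φ₁} + M_{Φ₂}. Then ∂/∂t E[exp(−(Φ₁+Φ₂)(f+tg))]|_{t=0} = − E[Φ₁(g) e^{−Φ₁(f)}] E[e^{−Φ₂(f)}] − E[Φ₂(g) e^{−Φ₂(f)}] E[e^{−Φ₁(f)}]. -/

import Mathlib

/-!
With `A = Φ₁(f) + Φ₂(f)` and `X = Φ₁(g) + Φ₂(g)` the Laplace functional is `t ↦ E[e^{-A-tX}]`.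
For each `ω` the map `t ↦ e^{-A-tX}` has right derivative `-X e^{-A}` at `0`, and its slopes on
`t > 0` are bounded by `X`. Campbell's formula gives `E X = M₁(g) + M₂(g) < ∞`, so dominated
convergence yields the derivative `-E[X e^{-A}]`, and independence of `Φ₁` and `Φ₂` splits
`E[Φᵢ(g) e^{-Φ₁(f)} e^{-Φ₂(f)}]` into the product of expectations.
-/

open MeasureTheory ProbabilityTheory ENNReal Set

/-- `negExp a = e^{-a}`, with the convention `e^{-∞} = 0`. -/
noncomputable def negExp (a : ℝ≥0∞) : ℝ≥0∞ :=
  if a = ∞ then 0 else ENNReal.ofReal (Real.exp (-a.toReal))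

open Filter Topology

@[simp]
theorem negExp_top : negExp ∞ = 0 := if_pos rfl

theorem negExp_of_ne_top {a : ℝ≥0∞} (ha : a ≠ ∞) :
    negExp a = ENNReal.ofReal (Real.exp (-a.toReal)) :=
  if_neg ha

theorem toReal_negExp {a : ℝ≥0∞} (ha : a ≠ ∞) : (negExp a).toReal = Real.exp (-a.toReal) := by
  rw [negExp_of_ne_top ha, ENNReal.toReal_ofReal (Real.exp_nonneg _)]

theorem negExp_ne_top (a : ℝ≥0∞) : negExp a ≠ ∞ := by
  unfold negExp; split <;> simp

theorem negExp_le_one (a : ℝ≥0∞) : negExp a ≤ 1 := by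
  rcases eq_or_ne a ∞ with rfl | ha
  · simp
  · rw [negExp_of_ne_top ha, ENNReal.ofReal_le_one, Real.exp_le_one_iff, neg_nonpos]
    exact ENNReal.toReal_nonneg

@[fun_prop]
theorem measurable_negExp : Measurable negExp :=
  Measurable.ite (measurableSet_singleton ∞) measurable_const
    (ENNReal.measurable_ofReal.comp (Real.measurable_exp.comp ENNReal.measurable_toReal.neg))

theorem negExp_add (a b : ℝ≥0∞) : negExp (a + b) = negExp a * negExp b := by
  rcases eq_or_ne a ∞ with rfl | ha
  · simp
  rcases eq_or_ne b ∞ with rfl | hb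
  · simp
  rw [negExp_of_ne_top (add_ne_top.2 ⟨ha, hb⟩), negExp_of_ne_top ha, negExp_of_ne_top hb,
    ENNReal.toReal_add ha hb, neg_add, Real.exp_add, ENNReal.ofReal_mul (Real.exp_nonneg _)]

theorem toReal_negExp_add_ofReal_mul {a x : ℝ≥0∞} (ha : a ≠ ∞) (hx : x ≠ ∞) {t : ℝ} (ht : 0 ≤ t) :
    (negExp (a + ENNReal.ofReal t * x)).toReal = Real.exp (-(a.toReal + t * x.toReal)) := by
  have htx : ENNReal.ofReal t * x ≠ ∞ := mul_ne_top ofReal_ne_top hx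
  rw [toReal_negExp (add_ne_top.2 ⟨ha, htx⟩), ENNReal.toReal_add ha htx, ENNReal.toReal_mul,
    ENNReal.toReal_ofReal ht]

theorem abs_toReal_negExp_add_ofReal_mul_sub_le {a x : ℝ≥0∞} (hx : x ≠ ∞) {t : ℝ} (ht : 0 ≤ t) :
    |(negExp (a + ENNReal.ofReal t * x)).toReal - (negExp a).toReal| ≤ t * x.toReal := by
  rcases eq_or_ne a ∞ with rfl | ha
  · simp only [top_add, negExp_top, toReal_zero, sub_self, abs_zero]
    positivity
  have h_a : Real.exp (-a.toReal) ≤ 1 := Real.exp_le_one_iff.2 (neg_nonpos.2 toReal_nonneg)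
  have h_tx : Real.exp (-(t * x.toReal)) ≤ 1 :=
    Real.exp_le_one_iff.2 (neg_nonpos.2 (mul_nonneg ht toReal_nonneg))
  rw [toReal_negExp_add_ofReal_mul ha hx ht, toReal_negExp ha, neg_add, Real.exp_add,
    abs_sub_comm, abs_of_nonneg (by nlinarith [Real.exp_pos (-a.toReal)])]
  -- `e^{-a} (1 - e^{-tx}) ≤ 1 - e^{-tx} ≤ tx`
  nlinarith [Real.one_sub_le_exp_neg (t * x.toReal), Real.exp_pos (-a.toReal)]

theorem hasDerivWithinAt_toReal_negExp_add_ofReal_mul (a : ℝ≥0∞) {x : ℝ≥0∞} (hx : x ≠ ∞) :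
    HasDerivWithinAt (fun t : ℝ => (negExp (a + ENNReal.ofReal t * x)).toReal)
      (-(x * negExp a).toReal) (Ici 0) 0 := by
  rcases eq_or_ne a ∞ with rfl | ha
  · simpa using hasDerivWithinAt_const (0 : ℝ) (Ici (0 : ℝ)) (0 : ℝ)
  have h_exp : HasDerivAt (fun t : ℝ => Real.exp (-(a.toReal + t * x.toReal)))
      (-(x.toReal * Real.exp (-a.toReal))) 0 := by
    convert (((hasDerivAt_id' (0 : ℝ)).mul_const x.toReal).const_add a.toReal).fun_neg.exp using 1
    simp
    ring
  rw [toReal_mul, toReal_negExp ha]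
  exact h_exp.hasDerivWithinAt.congr_of_mem
    (fun t ht => toReal_negExp_add_ofReal_mul ha hx ht) self_mem_Ici

theorem hasDerivWithinAt_integral_Ici_of_dominated_slope
    {Ω E : Type*} [MeasurableSpace Ω] {μ : Measure Ω}
    [NormedAddCommGroup E] [NormedSpace ℝ E] [CompleteSpace E]
    {F : ℝ → Ω → E} {F' : Ω → E} {bound : Ω → ℝ}
    (hF_int : ∀ t ∈ Ici (0 : ℝ), Integrable (F t) μ) (h_bound : Integrable bound μ)
    (h_lip : ∀ t ∈ Ioi (0 : ℝ), ∀ᵐ ω ∂μ, ‖F t ω - F 0 ω‖ ≤ t * bound ω)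
    (h_diff : ∀ᵐ ω ∂μ, HasDerivWithinAt (F · ω) (F' ω) (Ici 0) 0) :
    HasDerivWithinAt (fun t => ∫ ω, F t ω ∂μ) (∫ ω, F' ω ∂μ) (Ici 0) 0 := by
  rw [hasDerivWithinAt_iff_tendsto_slope, Ici_sdiff_left]
  have h_slope : Tendsto (fun t => ∫ ω, slope (F · ω) 0 t ∂μ) (𝓝[>] 0) (𝓝 (∫ ω, F' ω ∂μ)) := by
    refine tendsto_integral_filter_of_dominated_convergence bound ?_ ?_ h_bound ?_
    · filter_upwards [self_mem_nhdsWithin] with t ht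
      simp only [slope_def_module]
      exact (((hF_int t (mem_Ici_of_Ioi ht)).sub (hF_int 0 self_mem_Ici)).smul _)
        |>.aestronglyMeasurable
    · filter_upwards [self_mem_nhdsWithin] with t (ht : 0 < t)
      filter_upwards [h_lip t ht] with ω hω
      rw [slope_def_module, sub_zero, norm_smul, norm_inv, Real.norm_of_nonneg ht.le,
        inv_mul_le_iff₀ ht]
      exact hω
    · filter_upwards [h_diff] with ω hω
      exact (hasDerivWithinAt_iff_tendsto_slope.1 hω).mono_left
        (nhdsWithin_mono _ (by rw [Ici_sdiff_left]))
  refine h_slope.congr' ?_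
  filter_upwards [self_mem_nhdsWithin] with t ht
  simp only [slope_def_module]
  rw [integral_smul, integral_sub (hF_int t (mem_Ici_of_Ioi ht)) (hF_int 0 self_mem_Ici)]

theorem hasDerivWithinAt_toReal_lintegral_negExp_add_ofReal_mul {Ω : Type*} [MeasurableSpace Ω]
    {μ : Measure Ω} [IsFiniteMeasure μ] {A X : Ω → ℝ≥0∞} (hA : Measurable A) (hX : Measurable X)
    (hX_int : ∫⁻ ω, X ω ∂μ ≠ ∞) :
    HasDerivWithinAt (fun t : ℝ => (∫⁻ ω, negExp (A ω + ENNReal.ofReal t * X ω) ∂μ).toReal)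
      (-(∫⁻ ω, X ω * negExp (A ω) ∂μ).toReal) (Ici 0) 0 := by
  have hX_fin : ∀ᵐ ω ∂μ, X ω < ∞ := ae_lt_top hX hX_int
  have h_meas : ∀ t : ℝ, Measurable fun ω => negExp (A ω + ENNReal.ofReal t * X ω) := by
    fun_prop
  have h_lt_top : ∀ t : ℝ, ∀ᵐ ω ∂μ, negExp (A ω + ENNReal.ofReal t * X ω) < ∞ :=
    fun t => ae_of_all _ fun ω => (negExp_ne_top _).lt_top
  have h_int : ∀ t : ℝ, Integrable (fun ω => (negExp (A ω + ENNReal.ofReal t * X ω)).toReal) μ :=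
    fun t => integrable_toReal_of_lintegral_ne_top (h_meas t).aemeasurable
      (ne_top_of_le_ne_top (measure_ne_top μ univ) (by
        simpa using lintegral_mono fun ω => negExp_le_one (A ω + ENNReal.ofReal t * X ω)))
  simp_rw [← integral_toReal (h_meas _).aemeasurable (h_lt_top _)]
  rw [← integral_toReal (by fun_prop : Measurable fun ω => X ω * negExp (A ω)).aemeasurable
    (by filter_upwards [hX_fin] with ω hω using mul_lt_top hω (negExp_ne_top _).lt_top),
    ← integral_neg]
  refine hasDerivWithinAt_integral_Ici_of_dominated_slope (fun t _ => h_int t)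
    (integrable_toReal_of_lintegral_ne_top hX.aemeasurable hX_int) (fun t ht => ?_) ?_
  · filter_upwards [hX_fin] with ω hω
    simpa [Real.norm_eq_abs] using abs_toReal_negExp_add_ofReal_mul_sub_le hω.ne (le_of_lt ht)
  · filter_upwards [hX_fin] with ω hω
    exact hasDerivWithinAt_toReal_negExp_add_ofReal_mul (A ω) hω.ne

theorem lintegral_add_mul_negExp_add_of_indepFun {Ω β : Type*} [MeasurableSpace Ω]
    [MeasurableSpace β] {μ : Measure Ω} {Y₁ Y₂ : Ω → β} (hY₁ : Measurable Y₁)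
    (hY₂ : Measurable Y₂) (hindep : IndepFun Y₁ Y₂ μ) {a x : β → ℝ≥0∞} (ha : Measurable a)
    (hx : Measurable x) :
    ∫⁻ ω, (x (Y₁ ω) + x (Y₂ ω)) * negExp (a (Y₁ ω) + a (Y₂ ω)) ∂μ
      = (∫⁻ ω, x (Y₁ ω) * negExp (a (Y₁ ω)) ∂μ) * ∫⁻ ω, negExp (a (Y₂ ω)) ∂μ
        + (∫⁻ ω, x (Y₂ ω) * negExp (a (Y₂ ω)) ∂μ) * ∫⁻ ω, negExp (a (Y₁ ω)) ∂μ := by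
  have hu : Measurable fun y => x y * negExp (a y) := by fun_prop
  have hv : Measurable fun y => negExp (a y) := by fun_prop
  calc ∫⁻ ω, (x (Y₁ ω) + x (Y₂ ω)) * negExp (a (Y₁ ω) + a (Y₂ ω)) ∂μ
      = ∫⁻ ω, x (Y₁ ω) * negExp (a (Y₁ ω)) * negExp (a (Y₂ ω))
          + x (Y₂ ω) * negExp (a (Y₂ ω)) * negExp (a (Y₁ ω)) ∂μ := by
        congr 1 with ω
        rw [negExp_add]
        ring
    _ = _ := by
        rw [lintegral_add_left (by fun_prop)]
        exact congrArg₂ (· + ·)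
          (lintegral_mul_eq_lintegral_mul_lintegral_of_indepFun (hu.comp hY₁) (hv.comp hY₂)
            (hindep.comp hu hv))
          (lintegral_mul_eq_lintegral_mul_lintegral_of_indepFun (hu.comp hY₂) (hv.comp hY₁)
            (hindep.symm.comp hu hv))

theorem lintegral_lintegral_eq_lintegral_of_apply_eq {Ω 𝕏 : Type*} [MeasurableSpace Ω]
    [MeasurableSpace 𝕏] {P : Measure Ω} {Φ : Ω → Measure 𝕏} (hΦ : Measurable Φ) {M : Measure 𝕏}
    (hM : ∀ B, MeasurableSet B → M B = ∫⁻ ω, Φ ω B ∂P) {g : 𝕏 → ℝ≥0∞} (hg : Measurable g) :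
    ∫⁻ ω, ∫⁻ x, g x ∂(Φ ω) ∂P = ∫⁻ x, g x ∂M := by
  have h_bind : P.bind Φ = M := by
    ext B hB
    rw [Measure.bind_apply hB hΦ.aemeasurable, hM B hB]
  rw [← h_bind, Measure.lintegral_bind hΦ.aemeasurable hg.aemeasurable]

theorem laplace_deriv_superposition_general
    {Ω 𝕏 : Type*} [MeasurableSpace Ω] [MeasurableSpace 𝕏]
    (P : Measure Ω) [IsProbabilityMeasure P]
    (Φ₁ Φ₂ : Ω → Measure 𝕏) (hΦ₁ : Measurable Φ₁) (hΦ₂ : Measurable Φ₂)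
    (hindep : IndepFun Φ₁ Φ₂ P)
    (M₁ M₂ : Measure 𝕏)
    (hM₁ : ∀ B, MeasurableSet B → M₁ B = ∫⁻ ω, Φ₁ ω B ∂P)
    (hM₂ : ∀ B, MeasurableSet B → M₂ B = ∫⁻ ω, Φ₂ ω B ∂P)
    (f g : 𝕏 → ℝ≥0∞) (hf : Measurable f) (hg : Measurable g)
    (hgint : ∫⁻ x, g x ∂(M₁ + M₂) ≠ ∞) :
    HasDerivWithinAt
      (fun t : ℝ =>
        (∫⁻ ω, negExp (∫⁻ x, (f x + ENNReal.ofReal t * g x) ∂(Φ₁ ω + Φ₂ ω)) ∂P).toReal)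
      (-((∫⁻ ω, (∫⁻ x, g x ∂(Φ₁ ω)) * negExp (∫⁻ x, f x ∂(Φ₁ ω)) ∂P)
            * (∫⁻ ω, negExp (∫⁻ x, f x ∂(Φ₂ ω)) ∂P)
          + (∫⁻ ω, (∫⁻ x, g x ∂(Φ₂ ω)) * negExp (∫⁻ x, f x ∂(Φ₂ ω)) ∂P)
            * (∫⁻ ω, negExp (∫⁻ x, f x ∂(Φ₁ ω)) ∂P)).toReal)
      (Set.Ici (0 : ℝ)) 0 := by
  have hF := Measure.measurable_lintegral hf
  have hG := Measure.measurable_lintegral hg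
  have h_split : ∀ (t : ℝ) ω, ∫⁻ x, (f x + ENNReal.ofReal t * g x) ∂(Φ₁ ω + Φ₂ ω)
      = (∫⁻ x, f x ∂(Φ₁ ω) + ∫⁻ x, f x ∂(Φ₂ ω))
        + ENNReal.ofReal t * (∫⁻ x, g x ∂(Φ₁ ω) + ∫⁻ x, g x ∂(Φ₂ ω)) := fun t ω => by
    rw [lintegral_add_measure, lintegral_add_left hf, lintegral_add_left hf,
      lintegral_const_mul _ hg, lintegral_const_mul _ hg]
    ring
  have h_moment : ∫⁻ ω, (∫⁻ x, g x ∂(Φ₁ ω) + ∫⁻ x, g x ∂(Φ₂ ω)) ∂P ≠ ∞ := by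
    rwa [lintegral_add_left (by fun_prop), lintegral_lintegral_eq_lintegral_of_apply_eq hΦ₁ hM₁ hg,
      lintegral_lintegral_eq_lintegral_of_apply_eq hΦ₂ hM₂ hg, ← lintegral_add_measure]
  have h_deriv := hasDerivWithinAt_toReal_lintegral_negExp_add_ofReal_mul
    (A := fun ω => ∫⁻ x, f x ∂(Φ₁ ω) + ∫⁻ x, f x ∂(Φ₂ ω)) (by fun_prop) (by fun_prop) h_moment
  rw [lintegral_add_mul_negExp_add_of_indepFun hΦ₁ hΦ₂ hindep hF hG] at h_deriv
  simpa only [h_split] using h_deriv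

/-- For independent point processes `Φ₁, Φ₂`,
`∂/∂t E[exp(−(Φ₁+Φ₂)(f+tg))]|_{t=0}
  = −E[Φ₁(g) e^{−Φ₁(f)}] E[e^{−Φ₂(f)}] − E[Φ₂(g) e^{−Φ₂(f)}] E[e^{−Φ₁(f)}]`
(one-sided derivative at `t = 0`). -/
theorem laplace_deriv_superposition
    {Ω 𝕏 : Type*} [MeasurableSpace Ω] [MetricSpace 𝕏] [CompleteSpace 𝕏]
    [TopologicalSpace.SeparableSpace 𝕏] [MeasurableSpace 𝕏] [BorelSpace 𝕏]
    (P : Measure Ω) [IsProbabilityMeasure P]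
    (Φ₁ Φ₂ : Ω → Measure 𝕏) (hΦ₁ : Measurable Φ₁) (hΦ₂ : Measurable Φ₂)
    (hindep : IndepFun Φ₁ Φ₂ P)
    (M₁ M₂ : Measure 𝕏) [SigmaFinite M₁] [SigmaFinite M₂]
    (hM₁ : ∀ B, MeasurableSet B → M₁ B = ∫⁻ ω, Φ₁ ω B ∂P)
    (hM₂ : ∀ B, MeasurableSet B → M₂ B = ∫⁻ ω, Φ₂ ω B ∂P)
    (f g : 𝕏 → ℝ≥0∞) (hf : Measurable f) (hg : Measurable g)
    (hgint : ∫⁻ x, g x ∂(M₁ + M₂) ≠ ∞) :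
    HasDerivWithinAt
      (fun t : ℝ =>
        (∫⁻ ω, negExp (∫⁻ x, (f x + ENNReal.ofReal t * g x) ∂(Φ₁ ω + Φ₂ ω)) ∂P).toReal)
      (-((∫⁻ ω, (∫⁻ x, g x ∂(Φ₁ ω)) * negExp (∫⁻ x, f x ∂(Φ₁ ω)) ∂P)
            * (∫⁻ ω, negExp (∫⁻ x, f x ∂(Φ₂ ω)) ∂P)
          + (∫⁻ ω, (∫⁻ x, g x ∂(Φ₂ ω)) * negExp (∫⁻ x, f x ∂(Φ₂ ω)) ∂P)
            * (∫⁻ ω, negExp (∫⁻ x, f x ∂(Φ₁ ω)) ∂P)).toReal)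
      (Set.Ici (0 : ℝ)) 0 :=
  laplace_deriv_superposition_general P Φ₁ Φ₂ hΦ₁ hΦ₂ hindep M₁ M₂ hM₁ hM₂ f g hf hg hgint
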